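/- arXiv:1312.5866 — 2 statements merged into one kernel-verified Lean document; each statement's English description precedes it below -/
import Mathlib

section
/- Let n ≥ 3 and ψ = sinh on (0,R). For every C¹ function ξ : [0,R] → ℝ with ξ(R)=0 and ξ·ψ^{(n-2)/2} extending continuously by 0 at r=0, one has ∫₀^R sinh(r)^{n-1} ξ'(r)² dr ≥ ((n-2)²/4) ∫₀^R sinh(r)^{n-3} ξ(r)² dr + H ∫₀^R sinh(r)^{n-1} ξ(r)² dr, where H = (1/4)( sinh²R/(cosh R - 1)² + n(n-2) ). -/
/-!
For any `W` with `W(0) ξ(0)² = W(R) ξ(R)²` the integral of `(W ξ²)'` vanishes, and completing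
the square gives `w ξ'² + (W ξ²)' ≥ (W' - W² / w) ξ²` wherever `w > 0`. Take `w = sinh^{n-1}`
and `W = sinh^{n-2} (m cosh + c (cosh - 1))` with `m = (n-2)/2` and
`c = sinh² R / (2 (cosh R - 1)²) = (cosh R + 1) / (2 (cosh R - 1))`. Writing `x = cosh r`,
the defect `W' - W²/w - m² sinh^{n-3} - H sinh^{n-1}` equals
`sinh^{n-3} c (x - 1) ((x + 1)/2 - c (x - 1))`, which is nonnegative exactly when `x ≤ cosh R`.
-/

open Set Filter Real MeasureTheory

theorem integral_mul_sq_le_of_riccati {a b : ℝ} (hab : a ≤ b) {w V W W' ξ ξ' : ℝ → ℝ}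
    (hw : ContinuousOn w (Icc a b)) (hV : ContinuousOn V (Icc a b))
    (hW : ContinuousOn W (Icc a b)) (hW' : ContinuousOn W' (Icc a b))
    (hξ : ContinuousOn ξ (Icc a b)) (hξ' : ContinuousOn ξ' (Icc a b))
    (hWd : ∀ x ∈ Ioo a b, HasDerivAt W (W' x) x)
    (hξd : ∀ x ∈ Ioo a b, HasDerivAt ξ (ξ' x) x)
    (hbdry : W a * ξ a ^ 2 = W b * ξ b ^ 2) (hpos : ∀ x ∈ Ioo a b, 0 < w x)
    (hric : ∀ x ∈ Ioo a b, w x * V x + W x ^ 2 ≤ w x * W' x) :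
    ∫ x in a..b, V x * ξ x ^ 2 ≤ ∫ x in a..b, w x * ξ' x ^ 2 := by
  have hint {f : ℝ → ℝ} (hf : ContinuousOn f (Icc a b)) : IntervalIntegrable f volume a b :=
    (uIcc_of_le hab ▸ hf).intervalIntegrable
  set D : ℝ → ℝ := fun x => W' x * ξ x ^ 2 + W x * (2 * ξ x * ξ' x)
  have hD : IntervalIntegrable D volume a b :=
    hint ((hW'.mul (hξ.pow 2)).add (hW.mul ((hξ.const_smul (2:ℝ)).mul hξ')))
  have hD_zero : ∫ x in a..b, D x = 0 := by
    rw [intervalIntegral.integral_eq_sub_of_hasDerivAt_of_le (f := fun x => W x * ξ x ^ 2) hab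
      (hW.mul (hξ.pow 2)) (fun x hx => (hWd x hx).mul (by simpa using (hξd x hx).fun_pow 2)) hD,
      hbdry, sub_self]
  have hpt : ∀ x ∈ Ioo a b, V x * ξ x ^ 2 ≤ w x * ξ' x ^ 2 + D x := by
    intro x hx
    have hsq : w x * (w x * ξ' x ^ 2 + D x - V x * ξ x ^ 2)
        = (w x * ξ' x + W x * ξ x) ^ 2 + (w x * W' x - (w x * V x + W x ^ 2)) * ξ x ^ 2 := by
      ring
    have hprod : 0 ≤ w x * (w x * ξ' x ^ 2 + D x - V x * ξ x ^ 2) := hsq ▸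
      add_nonneg (sq_nonneg _) (mul_nonneg (sub_nonneg.mpr (hric x hx)) (sq_nonneg _))
    linarith [(mul_nonneg_iff_of_pos_left (hpos x hx)).mp hprod]
  have hwξ' : IntervalIntegrable (fun x => w x * ξ' x ^ 2) volume a b :=
    hint (hw.mul (hξ'.pow 2))
  calc ∫ x in a..b, V x * ξ x ^ 2
      ≤ ∫ x in a..b, (w x * ξ' x ^ 2 + D x) :=
        intervalIntegral.integral_mono_on_of_le_Ioo hab (hint (hV.mul (hξ.pow 2))) (hwξ'.add hD)
          hpt
    _ = ∫ x in a..b, w x * ξ' x ^ 2 := by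
        rw [intervalIntegral.integral_add hwξ' hD, hD_zero, add_zero]

theorem ContDiffOn.hasDerivAt_derivWithin_Icc {ξ : ℝ → ℝ} {a b x : ℝ}
    (hξ : ContDiffOn ℝ 1 ξ (Icc a b)) (hx : x ∈ Ioo a b) :
    HasDerivAt ξ (derivWithin ξ (Icc a b) x) x := by
  have hmem : Icc a b ∈ nhds x := Icc_mem_nhds hx.1 hx.2
  rw [derivWithin_of_mem_nhds hmem]
  exact ((hξ.contDiffAt hmem).differentiableAt one_ne_zero).hasDerivAt

-- The field `W` of the header, for `n = k + 3`.
noncomputable def hardyField (k : ℕ) (c r : ℝ) : ℝ :=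
  sinh r ^ (k + 1) * ((k + 1) / 2 * cosh r + c * (cosh r - 1))

noncomputable def hardyFieldDeriv (k : ℕ) (c r : ℝ) : ℝ :=
  (k + 1) * sinh r ^ k * cosh r * ((k + 1) / 2 * cosh r + c * (cosh r - 1))
    + sinh r ^ (k + 2) * ((k + 1) / 2 + c)

theorem hasDerivAt_hardyField (k : ℕ) (c r : ℝ) :
    HasDerivAt (hardyField k c) (hardyFieldDeriv k c r) r := by
  have hpow : HasDerivAt (fun y => sinh y ^ (k + 1)) ((k + 1) * sinh r ^ k * cosh r) r := by
    simpa using (hasDerivAt_sinh r).fun_pow (k + 1)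
  have hT : HasDerivAt (fun y => (k + 1) / 2 * cosh y + c * (cosh y - 1))
      (((k + 1) / 2 + c) * sinh r) r :=
    (((hasDerivAt_cosh r).const_mul _).add
      (((hasDerivAt_cosh r).sub_const 1).const_mul c)).congr_deriv (by ring)
  exact (hpow.mul hT).congr_deriv (by rw [hardyFieldDeriv]; ring)

theorem continuous_hardyField (k : ℕ) (c : ℝ) : Continuous (hardyField k c) := by
  unfold hardyField; fun_prop

theorem continuous_hardyFieldDeriv (k : ℕ) (c : ℝ) : Continuous (hardyFieldDeriv k c) := by
  unfold hardyFieldDeriv; fun_prop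

theorem hardyField_zero (k : ℕ) (c : ℝ) : hardyField k c 0 = 0 := by
  simp [hardyField]

theorem hardyField_riccati (k : ℕ) {c r : ℝ} (hc : 0 ≤ c)
    (hcr : 2 * c * (cosh r - 1) ≤ cosh r + 1) :
    sinh r ^ (k + 2) * (((k + 1) / 2) ^ 2 * sinh r ^ k
        + (c / 2 + ((k + 1) / 2) ^ 2 + (k + 1) / 2) * sinh r ^ (k + 2)) + hardyField k c r ^ 2
      ≤ sinh r ^ (k + 2) * hardyFieldDeriv k c r := by
  have hx : 1 ≤ cosh r := one_le_cosh r
  have hgap : 0 ≤ (cosh r + 1) / 2 - c * (cosh r - 1) := by linarith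
  rw [← sub_nonneg]
  convert (by positivity : 0 ≤ (sinh r ^ (k + 1)) ^ 2 * (c * (cosh r - 1)
    * ((cosh r + 1) / 2 - c * (cosh r - 1)))) using 1
  simp only [hardyField, hardyFieldDeriv]
  linear_combination (sinh r ^ (k + 1)) ^ 2 * (c / 2 - ((k + 1) / 2) ^ 2) * sinh_sq r

theorem integral_sinh_pow_mul_sq_le (k : ℕ) {R : ℝ} (hR : 0 < R) {ξ ξ' : ℝ → ℝ}
    (hξ : ContinuousOn ξ (Icc 0 R)) (hξ' : ContinuousOn ξ' (Icc 0 R))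
    (hξd : ∀ x ∈ Ioo 0 R, HasDerivAt ξ (ξ' x) x) (hξR : ξ R = 0) :
    ∫ r in 0..R, (((k + 1) / 2) ^ 2 * sinh r ^ k
        + ((cosh R + 1) / (4 * (cosh R - 1)) + ((k + 1) / 2) ^ 2 + (k + 1) / 2) * sinh r ^ (k + 2))
          * ξ r ^ 2
      ≤ ∫ r in 0..R, sinh r ^ (k + 2) * ξ' r ^ 2 := by
  set c := (cosh R + 1) / (2 * (cosh R - 1))
  have hcoshR : 1 < cosh R := one_lt_cosh.mpr hR.ne'
  have hc : 0 ≤ c := by positivity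
  refine integral_mul_sq_le_of_riccati hR.le (by fun_prop) (by fun_prop)
    (continuous_hardyField k c).continuousOn (continuous_hardyFieldDeriv k c).continuousOn hξ hξ'
    (fun r _ => hasDerivAt_hardyField k c r) hξd (by simp [hardyField_zero, hξR])
    (fun r hr => pow_pos (sinh_pos_iff.mpr hr.1) _) fun r hr => ?_
  have hcr : 2 * c * (cosh r - 1) ≤ cosh r + 1 := by
    have hr : cosh r ≤ cosh R := by
      rw [cosh_le_cosh, abs_of_pos hr.1, abs_of_pos hR]
      exact hr.2.le
    rw [show 2 * c * (cosh r - 1) = (cosh R + 1) * (cosh r - 1) / (cosh R - 1) by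
      simp only [c]; field_simp, div_le_iff₀ (by linarith)]
    nlinarith
  convert hardyField_riccati k hc hcr using 4
  simp only [c]
  field_simp
  ring

theorem stmt_3_general (n : ℕ) (hn : 3 ≤ n) (R : ℝ) (hR : 0 < R)
    (ξ : ℝ → ℝ) (hξ : ContDiffOn ℝ 1 ξ (Icc 0 R)) (hξR : ξ R = 0) :
    (∫ r in (0:ℝ)..R, Real.sinh r ^ (n - 1) * (deriv ξ r) ^ 2)
      ≥ (((n : ℝ) - 2) ^ 2 / 4) * (∫ r in (0:ℝ)..R, Real.sinh r ^ (n - 3) * (ξ r) ^ 2)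
        + (1 / 4) * (Real.sinh R ^ 2 / (Real.cosh R - 1) ^ 2 + (n : ℝ) * ((n : ℝ) - 2))
          * (∫ r in (0:ℝ)..R, Real.sinh r ^ (n - 1) * (ξ r) ^ 2) := by
  obtain ⟨k, rfl⟩ : ∃ k, n = k + 3 := ⟨n - 3, by omega⟩
  simp only [show k + 3 - 1 = k + 2 by omega, Nat.add_sub_cancel, ge_iff_le]
  have hderiv : ∫ r in 0..R, sinh r ^ (k + 2) * deriv ξ r ^ 2
      = ∫ r in 0..R, sinh r ^ (k + 2) * derivWithin ξ (Icc 0 R) r ^ 2 :=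
    intervalIntegral.integral_congr_Ioo_of_le hR.le fun r hr => by
      rw [(hξ.hasDerivAt_derivWithin_Icc hr).deriv]
  have hH : (1 / 4) * (sinh R ^ 2 / (cosh R - 1) ^ 2 + ((k + 3 : ℕ) : ℝ) * ((k + 3 : ℕ) - 2))
      = (cosh R + 1) / (4 * (cosh R - 1)) + ((k + 1) / 2) ^ 2 + (k + 1) / 2 := by
    have : cosh R - 1 ≠ 0 := by linarith [one_lt_cosh.mpr hR.ne']
    rw [sinh_sq]
    field_simp
    push_cast
    ring
  have hint (j : ℕ) : IntervalIntegrable (fun r => sinh r ^ j * ξ r ^ 2) volume 0 R :=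
    ((uIcc_of_le hR.le).symm ▸ (by fun_prop : Continuous fun r => sinh r ^ j).continuousOn.mul
      (hξ.continuousOn.pow 2)).intervalIntegrable
  have key := integral_sinh_pow_mul_sq_le k hR hξ.continuousOn
    (hξ.continuousOn_derivWithin (uniqueDiffOn_Icc hR) le_rfl)
    (fun r hr => hξ.hasDerivAt_derivWithin_Icc hr) hξR
  rw [hderiv, hH, ← intervalIntegral.integral_const_mul, ← intervalIntegral.integral_const_mul,
    ← intervalIntegral.integral_add ((hint k).const_mul _) ((hint (k + 2)).const_mul _)]
  push_cast
  convert key using 3 with r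
  ring

/-- Improved weighted Hardy inequality in hyperbolic space: for `n ≥ 3` and any `C¹`
function `ξ` on `[0,R]` with `ξ(R) = 0` such that `ξ · sinh^{(n-2)/2}` extends
continuously by `0` at `r = 0`,
`∫₀^R sinh^{n-1} ξ'² ≥ ((n-2)²/4) ∫₀^R sinh^{n-3} ξ² + H ∫₀^R sinh^{n-1} ξ²`,
where `H = (1/4)(sinh²R/(cosh R - 1)² + n(n-2))`. -/
theorem stmt_3 (n : ℕ) (hn : 3 ≤ n) (R : ℝ) (hR : 0 < R)
    (ξ : ℝ → ℝ) (hξ : ContDiffOn ℝ 1 ξ (Icc 0 R)) (hξR : ξ R = 0)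
    (hext : Tendsto (fun r => ξ r * Real.sinh r ^ (((n : ℝ) - 2) / 2))
      (nhdsWithin 0 (Ioi 0)) (nhds 0)) :
    (∫ r in (0:ℝ)..R, Real.sinh r ^ (n - 1) * (deriv ξ r) ^ 2)
      ≥ (((n : ℝ) - 2) ^ 2 / 4) * (∫ r in (0:ℝ)..R, Real.sinh r ^ (n - 3) * (ξ r) ^ 2)
        + (1 / 4) * (Real.sinh R ^ 2 / (Real.cosh R - 1) ^ 2 + (n : ℝ) * ((n : ℝ) - 2))
          * (∫ r in (0:ℝ)..R, Real.sinh r ^ (n - 1) * (ξ r) ^ 2) :=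
  stmt_3_general n hn R hR ξ hξ hξR
end

section
/- Let n ≥ 3 and 0 < R < π/2. The function u(r) = -2 log( sin(r)/sin(R) ) satisfies the radial equation -(sin(r)^{n-1} u'(r))' = sin(r)^{n-1} · 2(n-2) · ( e^{u(r)}/sin(R)² - (n-1)/(n-2) ) for all r ∈ (0,R), and u(R) = 0. -/
/-!
Since `u' = -2 cot r`, the flux `sin^{n-1} u'` is `-2 sin^{n-2} cos`, and `e^u = sin²R / sin²r`.
After `cos² = 1 - sin²`, both sides of the equation become the same polynomial in `sin r`.
-/

open Set Filter Topology Real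

theorem Real.exp_neg_two_mul_log {x : ℝ} (hx : x ≠ 0) : exp (-2 * log x) = (x ^ 2)⁻¹ := by
  rw [show -2 * log x = log ((x ^ 2)⁻¹) by rw [log_inv, log_pow]; push_cast; ring]
  exact exp_log (by positivity)

theorem hasDerivAt_neg_two_mul_log_sin_div {c x : ℝ} (hc : c ≠ 0) (hx : sin x ≠ 0) :
    HasDerivAt (fun t => -2 * log (sin t / c)) (-2 * (cos x / sin x)) x :=
  ((((hasDerivAt_sin x).div_const c).log (div_ne_zero hx hc)).const_mul (-2)).congr_deriv
    (by field_simp)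

theorem hasDerivAt_sin_pow_succ_mul_cos (k : ℕ) (x : ℝ) :
    HasDerivAt (fun s => sin s ^ (k + 1) * cos s)
      ((k + 1) * sin x ^ k - (k + 2) * sin x ^ (k + 2)) x := by
  refine (((hasDerivAt_sin x).pow (k + 1)).mul (hasDerivAt_cos x)).congr_deriv ?_
  have hcos : cos x ^ 2 = 1 - sin x ^ 2 := by linarith [sin_sq_add_cos_sq x]
  simp only [Pi.pow_apply, Nat.add_sub_cancel]
  push_cast
  linear_combination ((k + 1) * sin x ^ k) * hcos

theorem sin_pow_mul_deriv_neg_two_mul_log_sin_div_eventuallyEq (k : ℕ) {c x : ℝ} (hc : c ≠ 0)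
    (hx : sin x ≠ 0) :
    (fun s => sin s ^ (k + 2) * deriv (fun t => -2 * log (sin t / c)) s)
      =ᶠ[𝓝 x] fun s => -2 * (sin s ^ (k + 1) * cos s) := by
  filter_upwards [continuous_sin.continuousAt.eventually_ne hx] with s hs
  rw [(hasDerivAt_neg_two_mul_log_sin_div hc hs).deriv]
  field_simp
  ring

theorem hasDerivAt_sin_pow_mul_deriv_neg_two_mul_log_sin_div (k : ℕ) {c x : ℝ} (hc : c ≠ 0)
    (hx : sin x ≠ 0) :
    HasDerivAt (fun s => sin s ^ (k + 2) * deriv (fun t => -2 * log (sin t / c)) s)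
      (-2 * ((k + 1) * sin x ^ k - (k + 2) * sin x ^ (k + 2))) x :=
  ((hasDerivAt_sin_pow_succ_mul_cos k x).const_mul (-2)).congr_of_eventuallyEq
    (sin_pow_mul_deriv_neg_two_mul_log_sin_div_eventuallyEq k hc hx)

/-- The explicit singular solution for the exponential nonlinearity on the sphere:
for `0 < R < π/2`, `u(r) = -2 log(sin r / sin R)` satisfies
`-(sin^{n-1} u')' = sin^{n-1} · 2(n-2) · (e^u/sin²R - (n-1)/(n-2))` on `(0,R)`,
together with `u(R) = 0`. -/
theorem stmt_8 (n : ℕ) (hn : 3 ≤ n) (R : ℝ) (hR : 0 < R) (hR2 : R < Real.pi / 2) :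
    (∀ r ∈ Ioo 0 R,
      HasDerivAt
        (fun s => Real.sin s ^ (n - 1) *
          deriv (fun t => -2 * Real.log (Real.sin t / Real.sin R)) s)
        (-(Real.sin r ^ (n - 1) * (2 * ((n : ℝ) - 2)) *
          (Real.exp (-2 * Real.log (Real.sin r / Real.sin R)) / Real.sin R ^ 2
            - ((n : ℝ) - 1) / ((n : ℝ) - 2)))) r) ∧
    -2 * Real.log (Real.sin R / Real.sin R) = 0 := by
  have hRpi : R < π := by linarith [pi_pos]
  have hsinR : sin R ≠ 0 := (sin_pos_of_pos_of_lt_pi hR hRpi).ne'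
  refine ⟨fun r hr => ?_, by simp [hsinR]⟩
  have hsinr : sin r ≠ 0 := (sin_pos_of_pos_of_lt_pi hr.1 (hr.2.trans hRpi)).ne'
  obtain ⟨k, rfl⟩ : ∃ k, n = k + 3 := ⟨n - 3, by omega⟩
  refine (hasDerivAt_sin_pow_mul_deriv_neg_two_mul_log_sin_div k hsinR hsinr).congr_deriv ?_
  rw [exp_neg_two_mul_log (div_ne_zero hsinr hsinR)]
  have hk : (k : ℝ) + 1 ≠ 0 := by positivity
  push_cast
  rw [show (k : ℝ) + 3 - 2 = k + 1 by ring]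
  field_simp
  ring
end
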